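/- Let L be a multiplicative lattice, 𝔛 an M-closed subset, and i a proper element of L. The following are equivalent: (1) i is an 𝔛-element of L; (2) (i : a) is an 𝔛-element of L for every a ≰ i; (3) every element below (i : a) is in 𝔛, for all a ≰ i. -/

import Mathlib

/-- A multiplicative lattice: a complete lattice with a commutative, associative
multiplication distributing over arbitrary joins, with top as identity. -/
class MultiplicativeLattice (L : Type*) extends CompleteLattice L, CommMonoid L where
  mul_sSup : ∀ (a : L) (S : Set L), a * sSup S = ⨆ b ∈ S, a * b
  one_eq_top : (1 : L) = ⊤

/-- The December 2024 Mathlib definition of a compact element of a complete lattice. -/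
def CompleteLattice.IsCompactElement {α : Type*} [CompleteLattice α] (k : α) :=
  ∀ s : Set α, k ≤ sSup s → ∃ t : Finset α, ↑t ⊆ s ∧ k ≤ t.sup id

namespace MultiplicativeLattice

variable {L : Type*}

/-- A subset is M-closed if it is closed under multiplication. -/
def MClosed [MultiplicativeLattice L] (X : Set L) : Prop :=
  ∀ a ∈ X, ∀ b ∈ X, a * b ∈ X

/-- A proper element `i` is an `X`-element if `a * b ≤ i` and `a ∉ X` imply `b ≤ i`. -/
def IsXElement [MultiplicativeLattice L] (X : Set L) (i : L) : Prop :=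
  i ≠ ⊤ ∧ ∀ a b : L, a * b ≤ i → a ∉ X → b ≤ i

/-- A prime element. -/
def IsPrime [MultiplicativeLattice L] (p : L) : Prop :=
  p ≠ ⊤ ∧ ∀ a b : L, a * b ≤ p → a ≤ p ∨ b ≤ p

/-- The residual `(i : a) = ⋁ {x | x * a ≤ i}`. -/
def residual [MultiplicativeLattice L] (i a : L) : L := sSup {x : L | x * a ≤ i}

/-- The radical of an element. -/
def radical [MultiplicativeLattice L] (a : L) : L :=
  sSup {x : L | CompleteLattice.IsCompactElement x ∧ ∃ n : ℕ, x ^ (n + 1) ≤ a}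

/-- A primary element. -/
def IsPrimary [MultiplicativeLattice L] (i : L) : Prop :=
  i ≠ ⊤ ∧ ∀ a b : L, a * b ≤ i → a ≤ i ∨ b ≤ radical i

/-- A minimal prime element. -/
def IsMinimalPrime [MultiplicativeLattice L] (p : L) : Prop :=
  IsPrime p ∧ ∀ q : L, IsPrime q → q ≤ p → q = p

/-- An `X`-multiplicatively closed subset: a nonempty set `A` of compact elements
containing `L_* \ X`, with `a₁ ∈ L_* \ X` and `a₂ ∈ A` implying `a₁ * a₂ ∈ A`. -/
def IsXMultClosed [MultiplicativeLattice L] (X A : Set L) : Prop :=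
  A.Nonempty ∧ (∀ a ∈ A, CompleteLattice.IsCompactElement a) ∧
    ({c : L | CompleteLattice.IsCompactElement c} \ X) ⊆ A ∧
    ∀ a₁ ∈ ({c : L | CompleteLattice.IsCompactElement c} \ X), ∀ a₂ ∈ A, a₁ * a₂ ∈ A

end MultiplicativeLattice

/-- A c-lattice: a compactly generated multiplicative lattice in which `⊤` is compact
and the product of compact elements is compact. -/
class CLattice (L : Type*) extends MultiplicativeLattice L where
  compactlyGenerated : ∀ x : L,
    x = sSup {c : L | CompleteLattice.IsCompactElement c ∧ c ≤ x}
  compact_top : CompleteLattice.IsCompactElement (⊤ : L)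
  compact_mul : ∀ a b : L, CompleteLattice.IsCompactElement a →
    CompleteLattice.IsCompactElement b → CompleteLattice.IsCompactElement (a * b)

open MultiplicativeLattice CompleteLattice

/-!
Since `x ≤ (i : a)` iff `x * a ≤ i`, condition (3) is the contrapositive of the definition of an
`X`-element. Every element below an `X`-element `j` lies in `X`, because `x * ⊤ = x ≤ j` while
`⊤ ≰ j`; so (2) implies (3). Finally (1) passes to `(i : a)` by associativity:
`b * c ≤ (i : a)` means `b * (c * a) ≤ i`.
-/

namespace MultiplicativeLattice

variable {L : Type*} [MultiplicativeLattice L]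

theorem mul_sup (a b c : L) : a * (b ⊔ c) = a * b ⊔ a * c := by
  rw [← sSup_pair, mul_sSup, iSup_pair]

theorem mul_le_mul_right_of_le {b c : L} (h : b ≤ c) (a : L) : b * a ≤ c * a := by
  rw [mul_comm b, mul_comm c, ← sup_eq_right, ← mul_sup, sup_eq_right.2 h]

theorem residual_mul_le (i a : L) : residual i a * a ≤ i := by
  rw [mul_comm, residual, mul_sSup]
  exact iSup₂_le fun x hx => (mul_comm a x).trans_le hx

theorem le_residual_iff {i a x : L} : x ≤ residual i a ↔ x * a ≤ i :=
  ⟨fun h => (mul_le_mul_right_of_le h a).trans (residual_mul_le i a), fun h => le_sSup h⟩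

theorem residual_ne_top_of_not_le {i a : L} (ha : ¬ a ≤ i) : residual i a ≠ ⊤ := by
  intro h
  apply ha
  simpa [← one_eq_top, h] using residual_mul_le i a

theorem IsXElement.mem_of_le {X : Set L} {j x : L} (hj : IsXElement X j) (hx : x ≤ j) :
    x ∈ X := by
  by_contra hxX
  exact hj.1 (top_le_iff.1 (hj.2 x ⊤ (by rwa [← one_eq_top, mul_one]) hxX))

theorem IsXElement.residual {X : Set L} {i a : L} (hi : IsXElement X i) (ha : ¬ a ≤ i) :
    IsXElement X (residual i a) := by
  refine ⟨residual_ne_top_of_not_le ha, fun b c hbc hb => le_residual_iff.2 ?_⟩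
  exact hi.2 b (c * a) (by rw [← mul_assoc]; exact le_residual_iff.1 hbc) hb

theorem isXElement_iff_forall_le_residual_mem {X : Set L} {i : L} (hi : i ≠ ⊤) :
    IsXElement X i ↔ ∀ a : L, ¬ a ≤ i → ∀ x : L, x ≤ residual i a → x ∈ X := by
  constructor
  · rintro ⟨-, hX⟩ a ha x hx
    by_contra hxX
    exact ha (hX x a (le_residual_iff.1 hx) hxX)
  · refine fun h => ⟨hi, fun a b hab ha => ?_⟩
    by_contra hb
    exact ha (h b hb a (le_residual_iff.2 hab))

end MultiplicativeLattice

theorem stmt8_general {L : Type*} [MultiplicativeLattice L] (X : Set L)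
    (i : L) (hi : i ≠ ⊤) :
    (IsXElement X i ↔ ∀ a : L, ¬ a ≤ i → IsXElement X (residual i a)) ∧
    (IsXElement X i ↔ ∀ a : L, ¬ a ≤ i → ∀ x : L, x ≤ residual i a → x ∈ X) := by
  have h13 := isXElement_iff_forall_le_residual_mem (X := X) hi
  refine ⟨⟨fun h a ha => h.residual ha, fun h => h13.2 ?_⟩, h13⟩
  exact fun a ha x hx => (h a ha).mem_of_le hx

theorem stmt8 {L : Type*} [MultiplicativeLattice L] (X : Set L) (hX : MClosed X)
    (i : L) (hi : i ≠ ⊤) :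
    (IsXElement X i ↔ ∀ a : L, ¬ a ≤ i → IsXElement X (residual i a)) ∧
    (IsXElement X i ↔ ∀ a : L, ¬ a ≤ i → ∀ x : L, x ≤ residual i a → x ∈ X) :=
  stmt8_general X i hi
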